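/- Let S ⊆ ℝ² have connected interior and satisfy S = cl(int S), with S compact. Then S is staircase connected if and only if S is orthogonally convex and there is no point x ∈ S with hw_x(S) = vw_x(S) = 0. -/

import Mathlib

open Set MeasureTheory Bornology
open scoped ENNReal

noncomputable section

/-- `ℝ^d` as Euclidean space. -/
abbrev EucR (d : ℕ) := EuclideanSpace ℝ (Fin d)

/-- The segment from `x` to `y` is parallel to a coordinate axis
(all coordinates except possibly one agree). -/
def IsOrthSeg {d : ℕ} (x y : EucR d) : Prop :=
  ∃ i : Fin d, ∀ j, j ≠ i → x j = y j

/-- `p 0, p 1, …, p n` is an orthogonal polygonal path contained in `S`. -/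
def IsOrthPathIn {d : ℕ} (S : Set (EucR d)) (p : ℕ → EucR d) (n : ℕ) : Prop :=
  ∀ k, k < n → IsOrthSeg (p k) (p (k + 1)) ∧ segment ℝ (p k) (p (k + 1)) ⊆ S

/-- `S` is orthogonally connected. -/
def OrthConnected {d : ℕ} (S : Set (EucR d)) : Prop :=
  ∀ x ∈ S, ∀ y ∈ S, ∃ n : ℕ, ∃ p : ℕ → EucR d,
    p 0 = x ∧ p n = y ∧ IsOrthPathIn S p n

/-- An orthogonal path is a staircase if all edges parallel to the same axis
point in the same direction. -/
def IsStaircaseIn {d : ℕ} (S : Set (EucR d)) (p : ℕ → EucR d) (n : ℕ) : Prop :=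
  IsOrthPathIn S p n ∧
    ∀ k, k < n → ∀ l, l < n → ∀ i : Fin d,
      (∀ j, j ≠ i → p k j = p (k + 1) j) → (∀ j, j ≠ i → p l j = p (l + 1) j) →
        0 ≤ (p (k + 1) i - p k i) * (p (l + 1) i - p l i)

/-- `S` is staircase connected. -/
def StaircaseConnected {d : ℕ} (S : Set (EucR d)) : Prop :=
  ∀ x ∈ S, ∀ y ∈ S, ∃ n : ℕ, ∃ p : ℕ → EucR d,
    p 0 = x ∧ p n = y ∧ IsStaircaseIn S p n

/-- `S` is orthogonally convex. -/
def OrthConvex {d : ℕ} (S : Set (EucR d)) : Prop :=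
  ∀ x ∈ S, ∀ y ∈ S, IsOrthSeg x y → segment ℝ x y ⊆ S

/-- A convex body: compact convex with nonempty interior. -/
def IsConvexBody {d : ℕ} (K : Set (EucR d)) : Prop :=
  Convex ℝ K ∧ IsCompact K ∧ (interior K).Nonempty

/-- The point of `ℝ²` with coordinates `(a, b)`. -/
def pt2 (a b : ℝ) : EucR 2 := (WithLp.equiv 2 (Fin 2 → ℝ)).symm ![a, b]

/-- Horizontal width of `S` at `x`: the length of the connected component
containing `x` of the intersection of `S` with the horizontal line through `x`. -/
def hw (S : Set (EucR 2)) (x : EucR 2) : ℝ≥0∞ :=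
  volume (connectedComponentIn {t : ℝ | pt2 t (x 1) ∈ S} (x 0))

/-- Vertical width of `S` at `x`. -/
def vw (S : Set (EucR 2)) (x : EucR 2) : ℝ≥0∞ :=
  volume (connectedComponentIn {t : ℝ | pt2 (x 0) t ∈ S} (x 1))

/-- The set of unit directions from `x` towards points of `K`. -/
def dirSet (x : EucR 2) (K : Set (EucR 2)) : Set (EucR 2) :=
  {u | ∃ y ∈ K, y ≠ x ∧ u = ‖y - x‖⁻¹ • (y - x)}

/-- `α_x(K)`: the angular (1-dimensional Hausdorff) measure of the set of unit
directions from `x` towards other points of `K`. -/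
def angMeasure (x : EucR 2) (K : Set (EucR 2)) : ℝ≥0∞ :=
  μH[1] (dirSet x K)

/-- The half-line from `x` through `y`. -/
def rayFrom (x y : EucR 2) : Set (EucR 2) := {z | ∃ t : ℝ, 0 ≤ t ∧ z = x + t • (y - x)}

/-- `T_x(K)`: the union of the half-lines from `x` through the points of `K \ {x}`. -/
def TCone (x : EucR 2) (K : Set (EucR 2)) : Set (EucR 2) := ⋃ y ∈ K \ {x}, rayFrom x y

/-- `K` is obtuse: at every boundary point `x`, either `α_x(K) > π/2`, or
`α_x(K) = π/2` and `T_x(K) \ {x}` is not open. -/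
def Obtuse (K : Set (EucR 2)) : Prop :=
  ∀ x ∈ frontier K,
    ENNReal.ofReal (Real.pi / 2) < angMeasure x K ∨
      (angMeasure x K = ENNReal.ofReal (Real.pi / 2) ∧ ¬ IsOpen (TCone x K \ {x}))

/-- Inclusion of `ℝ² × ℝ` into `ℝ³`. -/
def incl3 (q : EucR 2) (t : ℝ) : EucR 3 := (WithLp.equiv 2 (Fin 3 → ℝ)).symm ![q 0, q 1, t]

/-- A piece of a continuum `C`: the closure of a connected component of
`C \ {x}` for some cut point `x` of `C`. -/
def IsPiece (C P : Set (EucR 2)) : Prop :=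
  ∃ x ∈ C, ¬ IsPreconnected (C \ {x}) ∧
    ∃ y ∈ C \ {x}, P = closure (connectedComponentIn (C \ {x}) y)

/-- `f` is unimodal on `[a,b]`: non-decreasing on `[a,c]`, non-increasing on `[c,b]`
for some `c ∈ (a,b)`. -/
def Unimodal (f : ℝ → ℝ) (a b : ℝ) : Prop :=
  ∃ c ∈ Ioo a b, MonotoneOn f (Icc a c) ∧ AntitoneOn f (Icc c b)

/-- `a` is an s-extreme point of `M`: it belongs to a staircase in `M` only as an
endpoint. -/
def SExtreme (M : Set (EucR 2)) (a : EucR 2) : Prop :=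
  a ∈ M ∧ ∀ n : ℕ, ∀ γ : ℕ → EucR 2, IsStaircaseIn M γ n →
    a ∈ ⋃ k ∈ Set.Iio n, segment ℝ (γ k) (γ (k + 1)) → a = γ 0 ∨ a = γ n

/-- `M ⊆ ℝ²` is a strip: the preimage of an interval of `ℝ` under a nonzero
linear functional (this includes half-planes and the whole plane). -/
def IsStrip (M : Set (EucR 2)) : Prop :=
  ∃ f : EucR 2 →ₗ[ℝ] ℝ, f ≠ 0 ∧ ∃ I : Set ℝ, I.OrdConnected ∧ M = f ⁻¹' I

end

/-!
Along a staircase every coordinate is monotone. Hence a staircase joining two points of an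
axis-parallel segment runs along that segment, which gives orthogonal convexity, and the first
non-degenerate edge of a staircase leaving `x` shows that `x` has a positive width.

Conversely, a point of positive width is the end of a non-degenerate axis-parallel segment in `S`;
as `S = cl int S`, an interior point near its middle is joined to it by two axis-parallel
segments in `S`. The interior, being open and connected, is joined up by axis-parallel paths, so
any two points of `S` are joined by an axis-parallel path in `S`. In an orthogonally convex planar
set such a path is straightened into a staircase edge by edge: an edge that doubles back is
replaced by a shortcut from the point of the staircase level with its endpoint.
-/

variable {d : ℕ}

def setCoord (x : EucR d) (i : Fin d) (t : ℝ) : EucR d :=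
  WithLp.toLp 2 (Function.update (WithLp.ofLp x) i t)

@[simp]
theorem setCoord_apply_self (x : EucR d) (i : Fin d) (t : ℝ) : setCoord x i t i = t := by
  simp [setCoord]

@[simp]
theorem setCoord_apply_of_ne (x : EucR d) {i j : Fin d} (t : ℝ) (h : j ≠ i) :
    setCoord x i t j = x j := by
  simp [setCoord, h]

@[simp]
theorem setCoord_self (x : EucR d) (i : Fin d) : setCoord x i (x i) = x := by
  ext j; by_cases h : j = i <;> simp [*]

theorem eq_setCoord_of_forall_ne {x y : EucR d} {i : Fin d} (h : ∀ j ≠ i, y j = x j) :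
    y = setCoord x i (y i) := by
  ext j; by_cases hj : j = i <;> simp [*]

theorem apply_ne_of_forall_ne {x y : EucR d} {i : Fin d} (h : ∀ j ≠ i, x j = y j)
    (hxy : x ≠ y) : x i ≠ y i := fun hi => hxy <| by ext j; by_cases hj : j = i <;> simp [*]

theorem apply_mem_uIcc_of_mem_segment {x y z : EucR d} (hz : z ∈ segment ℝ x y) (j : Fin d) :
    z j ∈ uIcc (x j) (y j) := by
  rw [← segment_eq_uIcc]
  obtain ⟨a, b, ha, hb, hab, rfl⟩ := hz
  exact ⟨a, b, ha, hb, hab, rfl⟩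

theorem setCoord_mem_segment_of_forall_ne {x y : EucR d} {i : Fin d} (h : ∀ j ≠ i, x j = y j)
    {t : ℝ} (ht : t ∈ uIcc (x i) (y i)) : setCoord x i t ∈ segment ℝ x y := by
  rw [← segment_eq_uIcc] at ht
  obtain ⟨a, b, ha, hb, hab, hcomb⟩ := ht
  refine ⟨a, b, ha, hb, hab, ?_⟩
  ext j
  by_cases hj : j = i
  · subst hj; simpa using hcomb
  · simp only [PiLp.add_apply, PiLp.smul_apply, smul_eq_mul, setCoord_apply_of_ne _ _ hj,
      ← h j hj]
    linear_combination x j * hab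

theorem IsOrthSeg.symm {x y : EucR d} (h : IsOrthSeg x y) : IsOrthSeg y x :=
  let ⟨i, hi⟩ := h; ⟨i, fun j hj => (hi j hj).symm⟩

theorem IsOrthSeg.forall_ne_of_apply_ne {x y : EucR d} (h : IsOrthSeg x y) {i : Fin d}
    (hi : x i ≠ y i) : ∀ j ≠ i, x j = y j := by
  obtain ⟨k, hk⟩ := h
  obtain rfl : k = i := by_contra fun hki => hi (hk i (Ne.symm hki))
  exact hk

theorem IsOrthSeg.setCoord_mem_segment {x y : EucR d} (h : IsOrthSeg x y) {i : Fin d} {t : ℝ}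
    (ht : t ∈ uIcc (x i) (y i)) : setCoord x i t ∈ segment ℝ x y := by
  by_cases hi : x i = y i
  · rw [hi, uIcc_self, mem_singleton_iff] at ht
    rw [ht, ← hi, setCoord_self]
    exact left_mem_segment ℝ x y
  · exact setCoord_mem_segment_of_forall_ne (h.forall_ne_of_apply_ne hi) ht

theorem isOrthSeg_of_apply_eq {x y : EucR 2} (i : Fin 2) (h : x i = y i) : IsOrthSeg x y :=
  ⟨i + 1, fun j hj => by rwa [show j = i by omega]⟩

theorem apply_eq_of_mem_segment {x y z : EucR d} (hz : z ∈ segment ℝ x y) {j : Fin d}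
    (hj : x j = y j) : z j = x j := by
  simpa [← hj] using apply_mem_uIcc_of_mem_segment hz j

theorem dist_setCoord_le (x y : EucR d) (i : Fin d) : dist (setCoord x i (y i)) x ≤ dist y x := by
  rw [EuclideanSpace.dist_eq, EuclideanSpace.dist_eq]
  gcongr with j
  by_cases hj : j = i
  · subst hj; simp
  · simp [hj]

theorem mem_uIcc_or_mem_uIcc_or_mem_uIcc (a b c : ℝ) :
    b ∈ uIcc a c ∨ c ∈ uIcc a b ∨ a ∈ uIcc b c := by
  simp only [mem_uIcc]
  rcases le_total a b with h1 | h1 <;> rcases le_total b c with h2 | h2 <;>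
    rcases le_total a c with h3 | h3 <;> tauto

theorem mem_uIcc_of_mem_uIcc_of_mem_uIcc {a b c t : ℝ} (hb : b ∈ uIcc a c)
    (ht : t ∈ uIcc b c) : b ∈ uIcc a t := by
  simp only [mem_uIcc] at *
  rcases hb with ⟨h1, h2⟩ | ⟨h1, h2⟩ <;> rcases ht with ⟨h3, h4⟩ | ⟨h3, h4⟩
  all_goals first
    | exact Or.inl ⟨by linarith, by linarith⟩
    | exact Or.inr ⟨by linarith, by linarith⟩

theorem monotoneOn_or_antitoneOn_Iic_succ_of_monotoneOn {α : Type*} [LinearOrder α]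
    {f : ℕ → α} {n : ℕ} (hf : MonotoneOn f (Iic n)) (hn : f n ∈ uIcc (f 0) (f (n + 1))) :
    MonotoneOn f (Iic (n + 1)) ∨ AntitoneOn f (Iic (n + 1)) := by
  have hsucc : ∀ k, Order.succ k ∈ Iic (n + 1) → k < n ∨ k = n := fun k hk => by
    simp only [Order.succ_eq_add_one, mem_Iic] at hk; omega
  have hmem : ∀ k, k ≤ n → k ∈ Iic n := fun k hk => hk
  rcases le_or_gt (f n) (f (n + 1)) with hstep | hstep
  · refine .inl <| monotoneOn_of_le_succ ordConnected_Iic fun k _ _ hk => ?_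
    rcases hsucc k hk with hk | rfl
    · exact hf (hmem k hk.le) (hmem (k + 1) hk) k.le_succ
    · exact hstep
  · have hn0 : f n ≤ f 0 := by
      rcases mem_uIcc.mp hn with h | h
      · exact absurd h.2 (not_le.mpr hstep)
      · exact h.2
    have hconst : ∀ k ≤ n, f k = f n := fun k hk =>
      le_antisymm (hf (hmem k hk) (hmem n le_rfl) hk)
        (hn0.trans (hf (hmem 0 n.zero_le) (hmem k hk) k.zero_le))
    refine .inr <| antitoneOn_of_succ_le ordConnected_Iic fun k _ _ hk => ?_
    rcases hsucc k hk with hk | rfl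
    · rw [Order.succ_eq_add_one, hconst k hk.le, hconst (k + 1) hk]
    · exact hstep.le

theorem monotoneOn_or_antitoneOn_Iic_succ {α : Type*} [LinearOrder α] {f : ℕ → α} {n : ℕ}
    (hf : MonotoneOn f (Iic n) ∨ AntitoneOn f (Iic n)) (hn : f n ∈ uIcc (f 0) (f (n + 1))) :
    MonotoneOn f (Iic (n + 1)) ∨ AntitoneOn f (Iic (n + 1)) := by
  rcases hf with hf | hf
  · exact monotoneOn_or_antitoneOn_Iic_succ_of_monotoneOn hf hn
  · have hn' : (OrderDual.toDual ∘ f) n ∈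
        uIcc ((OrderDual.toDual ∘ f) 0) ((OrderDual.toDual ∘ f) (n + 1)) := by
      simpa [uIcc_toDual] using hn
    rw [← monotoneOn_toDual_comp_iff, ← antitoneOn_toDual_comp_iff]
    exact (monotoneOn_or_antitoneOn_Iic_succ_of_monotoneOn (f := OrderDual.toDual ∘ f)
      (monotoneOn_toDual_comp_iff.mpr hf) hn').symm

def OrthEdge (S : Set (EucR d)) (x y : EucR d) : Prop :=
  IsOrthSeg x y ∧ segment ℝ x y ⊆ S

instance (S : Set (EucR d)) : Std.Symm (OrthEdge S) where
  symm _ _ h := ⟨h.1.symm, by rw [segment_symm]; exact h.2⟩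

theorem OrthEdge.mono {S T : Set (EucR d)} (hST : S ⊆ T) {x y : EucR d} (h : OrthEdge S x y) :
    OrthEdge T x y :=
  ⟨h.1, h.2.trans hST⟩

theorem OrthConvex.orthEdge {S : Set (EucR d)} (hS : OrthConvex S) {x y : EucR d} (hx : x ∈ S)
    (hy : y ∈ S) (hxy : IsOrthSeg x y) : OrthEdge S x y :=
  ⟨hxy, hS x hx y hy hxy⟩

section Staircase

variable {S : Set (EucR d)} {p : ℕ → EucR d} {n : ℕ}

theorem IsStaircaseIn.monotoneOn_or_antitoneOn (h : IsStaircaseIn S p n) (i : Fin d) :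
    MonotoneOn (fun k => p k i) (Iic n) ∨ AntitoneOn (fun k => p k i) (Iic n) := by
  have hsign : ∀ k < n, ∀ l < n, 0 ≤ (p (k + 1) i - p k i) * (p (l + 1) i - p l i) := by
    intro k hk l hl
    by_cases hk' : p k i = p (k + 1) i
    · simp [hk']
    by_cases hl' : p l i = p (l + 1) i
    · simp [hl']
    exact h.2 k hk l hl i ((h.1 k hk).1.forall_ne_of_apply_ne hk')
      ((h.1 l hl).1.forall_ne_of_apply_ne hl')
  have hlt : ∀ k, Order.succ k ∈ Iic n → k < n := fun k hk => by
    simp only [Order.succ_eq_add_one, mem_Iic] at hk; omega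
  by_cases hmono : ∀ k < n, p k i ≤ p (k + 1) i
  · exact .inl <| monotoneOn_of_le_succ ordConnected_Iic fun k _ _ hk => hmono k (hlt k hk)
  · push Not at hmono
    obtain ⟨l, hl, hdec⟩ := hmono
    refine .inr <| antitoneOn_of_succ_le ordConnected_Iic fun k _ _ hk => ?_
    simp only [Order.succ_eq_add_one] at hk ⊢
    nlinarith [hsign k (hlt k hk) l hl]

theorem isStaircaseIn_of_monotoneOn_or_antitoneOn (hp : IsOrthPathIn S p n)
    (hmono : ∀ i, MonotoneOn (fun k => p k i) (Iic n) ∨ AntitoneOn (fun k => p k i) (Iic n)) :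
    IsStaircaseIn S p n := by
  refine ⟨hp, fun k hk l hl i _ _ => ?_⟩
  have hmem : ∀ m < n, m ∈ Iic n ∧ m + 1 ∈ Iic n := fun m hm => ⟨hm.le, hm⟩
  rcases hmono i with h | h
  · exact mul_nonneg (sub_nonneg.mpr (h (hmem k hk).1 (hmem k hk).2 k.le_succ))
      (sub_nonneg.mpr (h (hmem l hl).1 (hmem l hl).2 l.le_succ))
  · exact mul_nonneg_of_nonpos_of_nonpos (sub_nonpos.mpr (h (hmem k hk).1 (hmem k hk).2 k.le_succ))
      (sub_nonpos.mpr (h (hmem l hl).1 (hmem l hl).2 l.le_succ))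

theorem IsStaircaseIn.congr {q : ℕ → EucR d} (hp : IsStaircaseIn S p n)
    (h : ∀ k ≤ n, p k = q k) : IsStaircaseIn S q n := by
  refine ⟨fun k hk => ?_, fun k hk l hl i => ?_⟩
  · rw [← h k hk.le, ← h (k + 1) hk]; exact hp.1 k hk
  · rw [← h k hk.le, ← h (k + 1) hk, ← h l hl.le, ← h (l + 1) hl]; exact hp.2 k hk l hl i

theorem isStaircaseIn_succ_iff :
    IsStaircaseIn S p (n + 1) ↔ IsStaircaseIn S p n ∧ OrthEdge S (p n) (p (n + 1)) ∧
      ∀ j, p n j ∈ uIcc (p 0 j) (p (n + 1) j) := by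
  constructor
  · intro h
    refine ⟨⟨fun k hk => h.1 k (by omega), fun k hk l hl => h.2 k (by omega) l (by omega)⟩,
      h.1 n n.lt_succ_self, fun j => ?_⟩
    exact monotoneOn_or_antitoneOn_iff_uIcc.mp (h.monotoneOn_or_antitoneOn j)
      0 (Nat.zero_le _) (n + 1) (mem_Iic.mpr le_rfl) n n.le_succ (by simp [uIcc_of_le])
  · rintro ⟨h, hedge, hbox⟩
    refine isStaircaseIn_of_monotoneOn_or_antitoneOn (fun k hk => ?_)
      fun j => monotoneOn_or_antitoneOn_Iic_succ (h.monotoneOn_or_antitoneOn j) (hbox j)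
    rcases Nat.lt_succ_iff_lt_or_eq.mp hk with hk | rfl
    · exact h.1 k hk
    · exact hedge

end Staircase

/-- Staircases from `x`, grown edge by edge: appending `a → b` keeps a path a staircase exactly
when `a` lies in the box spanned by `x` and `b` (`staircaseReachable_iff`). -/
inductive StaircaseReachable (S : Set (EucR d)) (x : EucR d) : EucR d → Prop
  | refl : StaircaseReachable S x x
  | tail {a b : EucR d} : StaircaseReachable S x a → OrthEdge S a b →
      (∀ j, a j ∈ uIcc (x j) (b j)) → StaircaseReachable S x b

namespace StaircaseReachable

variable {S : Set (EucR d)} {x y : EucR d}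

theorem exists_isStaircaseIn (h : StaircaseReachable S x y) :
    ∃ n p, p 0 = x ∧ p n = y ∧ IsStaircaseIn S p n := by
  induction h with
  | refl => exact ⟨0, fun _ => x, rfl, rfl, fun _ h => absurd h (Nat.not_lt_zero _),
      fun _ h => absurd h (Nat.not_lt_zero _)⟩
  | @tail a b _ hab hbox ih =>
    obtain ⟨n, p, hp0, hpn, hp⟩ := ih
    let q : ℕ → EucR d := fun k => if k ≤ n then p k else b
    have hqp : ∀ k ≤ n, p k = q k := fun k hk => (if_pos hk).symm
    have hq : q (n + 1) = b := if_neg (Nat.not_succ_le_self n)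
    refine ⟨n + 1, q, by rw [← hqp 0 n.zero_le, hp0], hq, isStaircaseIn_succ_iff.mpr
      ⟨hp.congr hqp, ?_, ?_⟩⟩
    · rwa [← hqp n le_rfl, hq, hpn]
    · rwa [← hqp n le_rfl, hq, hpn, ← hqp 0 n.zero_le, hp0]

theorem of_isStaircaseIn {n : ℕ} {p : ℕ → EucR d} (hp : IsStaircaseIn S p n) :
    StaircaseReachable S (p 0) (p n) := by
  induction n with
  | zero => exact .refl
  | succ n ih =>
    obtain ⟨hp, hedge, hbox⟩ := isStaircaseIn_succ_iff.mp hp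
    exact (ih hp).tail hedge hbox

theorem mem (hx : x ∈ S) (h : StaircaseReachable S x y) : y ∈ S := by
  induction h with
  | refl => exact hx
  | tail _ hab => exact hab.2 (right_mem_segment ℝ _ _)

theorem exists_apply_eq (h : StaircaseReachable S x y) {i : Fin d} {t : ℝ}
    (ht : t ∈ uIcc (x i) (y i)) :
    ∃ q, StaircaseReachable S x q ∧ q i = t ∧ ∀ j, q j ∈ uIcc (x j) (y j) := by
  induction h generalizing t with
  | refl =>
    rw [uIcc_self, mem_singleton_iff] at ht
    exact ⟨x, .refl, ht.symm, fun j => left_mem_uIcc⟩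
  | @tail a b hxa hab hbox ih =>
    by_cases hta : t ∈ uIcc (x i) (a i)
    · obtain ⟨q, hxq, hqi, hq⟩ := ih hta
      exact ⟨q, hxq, hqi, fun j => uIcc_subset_uIcc_left (hbox j) (hq j)⟩
    have htab : t ∈ uIcc (a i) (b i) := (uIcc_subset_uIcc_union_uIcc ht).resolve_left hta
    have hq : setCoord a i t ∈ segment ℝ a b := hab.1.setCoord_mem_segment htab
    refine ⟨setCoord a i t, hxa.tail ⟨⟨i, fun j hj => by simp [hj]⟩, ?_⟩ fun j => ?_,
      setCoord_apply_self a i t, fun j => ?_⟩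
    · exact ((convex_segment a b).segment_subset (left_mem_segment ℝ a b) hq).trans hab.2
    · by_cases hj : j = i
      · subst hj; simpa using mem_uIcc_of_mem_uIcc_of_mem_uIcc (hbox j) htab
      · simp [hj]
    · by_cases hj : j = i
      · subst hj; simpa using ht
      · simpa [hj] using hbox j

theorem segment_subset (hx : x ∈ S) (h : StaircaseReachable S x y) {i : Fin d}
    (hxy : ∀ j ≠ i, x j = y j) : segment ℝ x y ⊆ S := by
  induction h with
  | refl => simpa using hx
  | @tail a b _ hab hbox ih =>
    have hxa : ∀ j ≠ i, x j = a j := fun j hj => by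
      simpa [← hxy j hj, eq_comm] using hbox j
    intro z hz
    have hzx : ∀ j ≠ i, z j = x j := fun j hj => apply_eq_of_mem_segment hz (hxy j hj)
    rcases uIcc_subset_uIcc_union_uIcc (apply_mem_uIcc_of_mem_segment hz i) with hzi | hzi
    · rw [eq_setCoord_of_forall_ne hzx]
      exact ih hxa (setCoord_mem_segment_of_forall_ne hxa hzi)
    · rw [eq_setCoord_of_forall_ne fun j hj => (hzx j hj).trans (hxa j hj)]
      exact hab.2 (hab.1.setCoord_mem_segment hzi)

theorem exists_orthEdge_ne (h : StaircaseReachable S x y) (hxy : y ≠ x) :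
    ∃ e ≠ x, OrthEdge S x e := by
  induction h with
  | refl => exact absurd rfl hxy
  | @tail a b _ hab _ ih =>
    by_cases hax : a = x
    · exact ⟨b, hxy, hax ▸ hab⟩
    · exact ih hax

end StaircaseReachable

theorem staircaseReachable_iff {S : Set (EucR d)} {x y : EucR d} :
    StaircaseReachable S x y ↔ ∃ n p, p 0 = x ∧ p n = y ∧ IsStaircaseIn S p n := by
  refine ⟨StaircaseReachable.exists_isStaircaseIn, ?_⟩
  rintro ⟨n, p, rfl, rfl, hp⟩
  exact .of_isStaircaseIn hp

theorem staircaseConnected_iff_staircaseReachable {S : Set (EucR d)} :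
    StaircaseConnected S ↔ ∀ x ∈ S, ∀ y ∈ S, StaircaseReachable S x y :=
  forall₂_congr fun _ _ => forall₂_congr fun _ _ => staircaseReachable_iff.symm

section Plane

open Relation

variable {S : Set (EucR 2)} {x y : EucR 2}

theorem StaircaseReachable.tail_of_orthConvex (hS : OrthConvex S) (hx : x ∈ S) {a b : EucR 2}
    (hxa : StaircaseReachable S x a) (hab : OrthEdge S a b) : StaircaseReachable S x b := by
  obtain ⟨⟨i, hi⟩, hsub⟩ := hab
  have hbS : b ∈ S := hsub (right_mem_segment ℝ a b)
  rcases mem_uIcc_or_mem_uIcc_or_mem_uIcc (x i) (a i) (b i) with h | h | h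
  · refine hxa.tail ⟨⟨i, hi⟩, hsub⟩ fun j => ?_
    by_cases hj : j = i
    · exact hj ▸ h
    · exact hi j hj ▸ right_mem_uIcc
  -- go back along the staircase to the point `q` level with `b`, then straight to `b`
  · obtain ⟨q, hxq, hqi, hq⟩ := hxa.exists_apply_eq h
    refine hxq.tail (hS.orthEdge (hxq.mem hx) hbS (isOrthSeg_of_apply_eq i hqi)) fun j => ?_
    by_cases hj : j = i
    · subst hj; exact hqi ▸ right_mem_uIcc
    · exact hi j hj ▸ hq j
  -- the staircase to `a` overshoots: go around it through the point of `[a, b]` level with `x`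
  · have hw : setCoord a i (x i) ∈ segment ℝ a b :=
      IsOrthSeg.setCoord_mem_segment ⟨i, hi⟩ h
    have hxw : StaircaseReachable S x (setCoord a i (x i)) :=
      StaircaseReachable.refl.tail
        (hS.orthEdge hx (hsub hw) (isOrthSeg_of_apply_eq i (setCoord_apply_self a i _).symm))
        fun j => left_mem_uIcc
    refine hxw.tail ⟨⟨i, fun j hj => by simp [hj, hi j hj]⟩,
      ((convex_segment a b).segment_subset hw (right_mem_segment ℝ a b)).trans hsub⟩ fun j => ?_
    by_cases hj : j = i
    · subst hj; simp
    · simp [hj, hi j hj]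

theorem StaircaseReachable.of_reflTransGen (hS : OrthConvex S) (hx : x ∈ S)
    (h : ReflTransGen (OrthEdge S) x y) : StaircaseReachable S x y := by
  induction h with
  | refl => exact .refl
  | tail _ hab ih => exact ih.tail_of_orthConvex hS hx hab

theorem reflTransGen_orthEdge_ball {ε : ℝ} (hy : y ∈ Metric.ball x ε) :
    ReflTransGen (OrthEdge (Metric.ball x ε)) x y := by
  have hx : x ∈ Metric.ball x ε := Metric.mem_ball_self (Metric.pos_of_mem_ball hy)
  have hc : setCoord x 0 (y 0) ∈ Metric.ball x ε := (dist_setCoord_le x y 0).trans_lt hy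
  exact .tail
    (.single ⟨isOrthSeg_of_apply_eq 1 (by simp), (convex_ball x ε).segment_subset hx hc⟩)
    ⟨isOrthSeg_of_apply_eq 0 (by simp), (convex_ball x ε).segment_subset hc hy⟩

theorem IsPreconnected.reflTransGen_orthEdge {U : Set (EucR 2)} (hU : IsOpen U)
    (hc : IsPreconnected U) (hx : x ∈ U) (hy : y ∈ U) : ReflTransGen (OrthEdge U) x y := by
  refine hc.induction₂ _ (fun z hz => ?_) (fun _ _ _ _ _ _ => ReflTransGen.trans)
    (fun _ _ _ _ => symm) hx hy
  obtain ⟨ε, hε, hball⟩ := Metric.isOpen_iff.mp hU z hz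
  filter_upwards [mem_nhdsWithin_of_mem_nhds (Metric.ball_mem_nhds z hε)] with w hw
  exact ReflTransGen.mono (fun _ _ => OrthEdge.mono hball) _ _ (reflTransGen_orthEdge_ball hw)

theorem exists_mem_interior_reflTransGen_orthEdge (hcl : S = closure (interior S))
    (hS : OrthConvex S) (hyx : y ≠ x) (hxy : OrthEdge S x y) :
    ∃ z ∈ interior S, ReflTransGen (OrthEdge S) x z := by
  obtain ⟨⟨i, hi⟩, hseg⟩ := hxy
  have hne : x i ≠ y i := apply_ne_of_forall_ne hi hyx.symm
  -- an interior point close to the middle of `[x, y]` lies in the slab between `x` and `y`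
  let slab := (fun v : EucR 2 => v i) ⁻¹' Ioo (min (x i) (y i)) (max (x i) (y i))
  have hmid : (x i + y i) / 2 ∈ Ioo (min (x i) (y i)) (max (x i) (y i)) := by
    rcases hne.lt_or_gt with h | h
    · simp only [min_eq_left h.le, max_eq_right h.le]; constructor <;> linarith
    · simp only [min_eq_right h.le, max_eq_left h.le]; constructor <;> linarith
  have hm : setCoord x i ((x i + y i) / 2) ∈ closure (interior S) :=
    hcl ▸ hseg (setCoord_mem_segment_of_forall_ne hi (Ioo_subset_Icc_self hmid))
  obtain ⟨z, hzslab, hz⟩ := mem_closure_iff.mp hm slab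
    (isOpen_Ioo.preimage (by fun_prop)) (by simpa [slab] using hmid)
  have hw : setCoord x i (z i) ∈ segment ℝ x y :=
    setCoord_mem_segment_of_forall_ne hi (Ioo_subset_Icc_self hzslab)
  refine ⟨z, hz, .tail (.single ⟨⟨i, fun j hj => by simp [hj]⟩, ?_⟩)
    (hS.orthEdge (hseg hw) (interior_subset hz) (isOrthSeg_of_apply_eq i (by simp)))⟩
  exact ((convex_segment x y).segment_subset (left_mem_segment ℝ x y) hw).trans hseg

end Plane

noncomputable def coordWidth (S : Set (EucR d)) (x : EucR d) (i : Fin d) : ℝ≥0∞ :=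
  volume (connectedComponentIn {t : ℝ | setCoord x i t ∈ S} (x i))

theorem coordWidth_ne_zero_iff {S : Set (EucR d)} {x : EucR d} {i : Fin d} :
    coordWidth S x i ≠ 0 ↔ ∃ y ≠ x, (∀ j ≠ i, x j = y j) ∧ segment ℝ x y ⊆ S := by
  set F := {t : ℝ | setCoord x i t ∈ S}
  constructor
  · intro h
    have hC : (connectedComponentIn F (x i)).Nontrivial :=
      not_subsingleton_iff.mp fun hsub => h (hsub.measure_zero volume)
    obtain ⟨t, htC, hti⟩ := hC.exists_ne (x i)
    have hxi : x i ∈ connectedComponentIn F (x i) :=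
      mem_connectedComponentIn (connectedComponentIn_nonempty_iff.mp hC.nonempty)
    have hF : uIcc (x i) t ⊆ F :=
      (isPreconnected_connectedComponentIn.ordConnected.uIcc_subset hxi htC).trans
        (connectedComponentIn_subset F (x i))
    refine ⟨setCoord x i t, fun h => hti (by simpa using congrArg (· i) h),
      fun j hj => by simp [hj], fun z hz => ?_⟩
    have hzx : ∀ j ≠ i, z j = x j := fun j hj =>
      apply_eq_of_mem_segment hz (by simp [hj])
    rw [eq_setCoord_of_forall_ne hzx]
    exact hF (by simpa using apply_mem_uIcc_of_mem_segment hz i)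
  · rintro ⟨y, hyx, hi, hseg⟩ h0
    have hsub : uIcc (x i) (y i) ⊆ connectedComponentIn F (x i) :=
      isPreconnected_uIcc.subset_connectedComponentIn left_mem_uIcc
        fun t ht => hseg (setCoord_mem_segment_of_forall_ne hi ht)
    have := measure_mono_null hsub h0
    rw [Real.volume_interval, ENNReal.ofReal_eq_zero, abs_nonpos_iff, sub_eq_zero] at this
    exact apply_ne_of_forall_ne hi hyx.symm this.symm

theorem pt2_eq_setCoord_zero (x : EucR 2) (t : ℝ) : pt2 t (x 1) = setCoord x 0 t := by
  ext j; fin_cases j <;> simp [pt2]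

theorem pt2_eq_setCoord_one (x : EucR 2) (t : ℝ) : pt2 (x 0) t = setCoord x 1 t := by
  ext j; fin_cases j <;> simp [pt2]

theorem hw_ne_zero_or_vw_ne_zero_iff {S : Set (EucR 2)} {x : EucR 2} :
    hw S x ≠ 0 ∨ vw S x ≠ 0 ↔ ∃ y ≠ x, OrthEdge S x y := by
  have hw_eq : hw S x = coordWidth S x 0 := by simp only [hw, coordWidth, pt2_eq_setCoord_zero]
  have vw_eq : vw S x = coordWidth S x 1 := by simp only [vw, coordWidth, pt2_eq_setCoord_one]
  rw [hw_eq, vw_eq, ← Fin.exists_fin_two (p := fun i => coordWidth S x i ≠ 0)]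
  simp only [coordWidth_ne_zero_iff, OrthEdge, IsOrthSeg]
  constructor
  · rintro ⟨i, y, hyx, hi, hseg⟩
    exact ⟨y, hyx, ⟨i, hi⟩, hseg⟩
  · rintro ⟨y, hyx, ⟨i, hi⟩, hseg⟩
    exact ⟨i, y, hyx, hi, hseg⟩

theorem staircaseConnected_iff_orthConvex_and_widths_general (S : Set (EucR 2))
    (hcl : S = closure (interior S)) (hconn : IsConnected (interior S)) :
    StaircaseConnected S ↔
      (OrthConvex S ∧ ∀ x ∈ S, hw S x ≠ 0 ∨ vw S x ≠ 0) := by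
  simp only [staircaseConnected_iff_staircaseReachable, hw_ne_zero_or_vw_ne_zero_iff]
  constructor
  · intro h
    refine ⟨fun u hu v hv ⟨i, hi⟩ => (h u hu v hv).segment_subset hu hi, fun x hx => ?_⟩
    obtain ⟨z, hz⟩ : (interior S).Nonempty := closure_nonempty_iff.mp ⟨x, hcl ▸ hx⟩
    have hS : S.Nontrivial := (infinite_of_mem_nhds z (mem_interior_iff_mem_nhds.mp hz)).nontrivial
    obtain ⟨y, hy, hyx⟩ := hS.exists_ne x
    exact (h x hx y hy).exists_orthEdge_ne hyx
  · rintro ⟨hS, hwidth⟩ x hx y hy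
    obtain ⟨x', hx'x, hxx'⟩ := hwidth x hx
    obtain ⟨y', hy'y, hyy'⟩ := hwidth y hy
    obtain ⟨u, hu, hxu⟩ := exists_mem_interior_reflTransGen_orthEdge hcl hS hx'x hxx'
    obtain ⟨v, hv, hyv⟩ := exists_mem_interior_reflTransGen_orthEdge hcl hS hy'y hyy'
    have huv := Relation.ReflTransGen.mono (fun _ _ => OrthEdge.mono interior_subset) _ _
      (hconn.isPreconnected.reflTransGen_orthEdge isOpen_interior hu hv)
    exact .of_reflTransGen hS hx (hxu.trans (huv.trans (symm hyv)))

/-- A compact set `S ⊆ ℝ²` with connected interior satisfying `S = cl int S` is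
staircase connected iff it is orthogonally convex and no point has both widths zero. -/
theorem staircaseConnected_iff_orthConvex_and_widths (S : Set (EucR 2))
    (hcl : S = closure (interior S)) (hconn : IsConnected (interior S))
    (hcomp : IsCompact S) :
    StaircaseConnected S ↔
      (OrthConvex S ∧ ∀ x ∈ S, hw S x ≠ 0 ∨ vw S x ≠ 0) :=
  staircaseConnected_iff_orthConvex_and_widths_general S hcl hconn
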